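/- arXiv:1606.06793 — 5 statements merged into one kernel-verified Lean document; each statement's English description precedes it below -/
import Mathlib

section
/- Let p ≥ 1 and a, b > 0 be real numbers, and define f(x; a, b, p) = a·x^{p−1} − x + b for x ≥ 0. Then: (i) if p < 2 and M = max(1, (a+b)^{1/(2−p)}), then f(M; a, b, p) ≤ 0; (ii) if p = 2 and a < 1 and M = b/(1−a), then f(M; a, b, p) ≤ 0; (iii) if p > 2 and a·b^{p−2} ≤ (p−2)^{p−2}/(p−1)^{p−1}, and M = (1/((p−1)a))^{1/(p−2)}, then f(M; a, b, p) ≤ 0. -/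
/-!
For `p < 2` the term `x ^ (p - 1)` grows sublinearly: once `M ≥ 1` and `M ^ (2 - p) ≥ a + b`,
`a M^{p-1} + b ≤ (a + b) M^{p-1} ≤ M`. For `p = 2` the function is affine with root `b / (1 - a)`.
For `p > 2` the chosen `M` is the critical point of `f`, where `(p - 1) a M^{p-2} = 1`, so
`f(M) = b - M (p - 2) / (p - 1)`; the hypothesis on `a b^{p-2}` is exactly `M ≥ b (p - 1) / (p - 2)`
after raising both sides to the power `p - 2`.
-/

open Real

lemma mul_rpow_sub_one_sub_add_nonpos_of_le_rpow {p a b M : ℝ} (hp : 1 ≤ p) (hb : 0 ≤ b)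
    (hM : 1 ≤ M) (h : a + b ≤ M ^ (2 - p)) : a * M ^ (p - 1) - M + b ≤ 0 := by
  have hM_pow : 1 ≤ M ^ (p - 1) := one_le_rpow hM (by linarith)
  have hM_split : M ^ (2 - p) * M ^ (p - 1) = M := by
    rw [← rpow_add (by linarith)]
    norm_num
  calc a * M ^ (p - 1) - M + b ≤ (a + b) * M ^ (p - 1) - M := by nlinarith
    _ ≤ M ^ (2 - p) * M ^ (p - 1) - M := by gcongr
    _ = 0 := by rw [hM_split, sub_self]

lemma le_max_one_rpow_one_div_rpow {x r : ℝ} (hx : 0 ≤ x) (hr : 0 < r) :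
    x ≤ (max 1 (x ^ (1 / r))) ^ r :=
  calc x = (x ^ r⁻¹) ^ r := (rpow_inv_rpow hx hr.ne').symm
    _ ≤ (max 1 (x ^ (1 / r))) ^ r := by
      rw [one_div]
      gcongr
      exact le_max_right _ _

lemma rpow_one_div_rpow_add_one {c q : ℝ} (hc : 0 < c) (hq : q ≠ 0) :
    (c ^ (1 / q)) ^ (q + 1) = c * c ^ (1 / q) := by
  rw [rpow_add_one (rpow_pos_of_pos hc _).ne', one_div, rpow_inv_rpow hc.le hq]

lemma div_le_rpow_one_div_of_mul_rpow_le {p a b : ℝ} (hp : 2 < p) (ha : 0 < a) (hb : 0 ≤ b)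
    (h : a * b ^ (p - 2) ≤ (p - 2) ^ (p - 2) / (p - 1) ^ (p - 1)) :
    b * (p - 1) / (p - 2) ≤ (1 / ((p - 1) * a)) ^ (1 / (p - 2)) := by
  have hp2 : 0 < p - 2 := by linarith
  have hp1 : 0 < p - 1 := by linarith
  rw [one_div (p - 2), le_rpow_inv_iff_of_pos (by positivity) (by positivity) hp2,
    div_rpow (by positivity) hp2.le, mul_rpow hb hp1.le]
  have hp1_pow : (p - 1) ^ (p - 1) = (p - 1) ^ (p - 2) * (p - 1) := by
    rw [← rpow_add_one hp1.ne']
    ring_nf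
  have hp2_pow_pos : 0 < (p - 2) ^ (p - 2) := rpow_pos_of_pos hp2 _
  have hp1_pow_pos : 0 < (p - 1) ^ (p - 2) := rpow_pos_of_pos hp1 _
  rw [hp1_pow, le_div_iff₀ (by positivity)] at h
  rw [div_le_div_iff₀ (by positivity) (by positivity)]
  nlinarith

lemma mul_rpow_sub_one_sub_add_nonpos_of_critical {p a b : ℝ} (hp : 2 < p) (ha : 0 < a)
    (hb : 0 ≤ b) (h : a * b ^ (p - 2) ≤ (p - 2) ^ (p - 2) / (p - 1) ^ (p - 1)) :
    a * ((1 / ((p - 1) * a)) ^ (1 / (p - 2))) ^ (p - 1)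
      - (1 / ((p - 1) * a)) ^ (1 / (p - 2)) + b ≤ 0 := by
  have hp1 : 0 < p - 1 := by linarith
  have hM := div_le_rpow_one_div_of_mul_rpow_le hp ha hb h
  set M := (1 / ((p - 1) * a)) ^ (1 / (p - 2))
  have hM_pow : M ^ (p - 1) = 1 / ((p - 1) * a) * M := by
    have := rpow_one_div_rpow_add_one (c := 1 / ((p - 1) * a)) (by positivity)
      (by linarith : p - 2 ≠ 0)
    rwa [show p - 2 + 1 = p - 1 by ring] at this
  have hM_val : a * M ^ (p - 1) = M / (p - 1) := by
    rw [hM_pow]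
    field_simp
  rw [div_le_iff₀ (by linarith)] at hM
  have hf : M / (p - 1) - M + b = (b * (p - 1) - M * (p - 2)) / (p - 1) := by
    field_simp
    ring
  rw [hM_val, hf]
  exact div_nonpos_of_nonpos_of_nonneg (by linarith) hp1.le

theorem stmt_1 (p a b : ℝ) (hp : 1 ≤ p) (ha : 0 < a) (hb : 0 < b) :
    (p < 2 →
      (fun M : ℝ => a * M ^ (p - 1) - M + b) (max 1 ((a + b) ^ (1 / (2 - p)))) ≤ 0) ∧
    (p = 2 → a < 1 →
      (fun M : ℝ => a * M ^ (p - 1) - M + b) (b / (1 - a)) ≤ 0) ∧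
    (2 < p → a * b ^ (p - 2) ≤ (p - 2) ^ (p - 2) / (p - 1) ^ (p - 1) →
      (fun M : ℝ => a * M ^ (p - 1) - M + b) ((1 / ((p - 1) * a)) ^ (1 / (p - 2))) ≤ 0) := by
  refine ⟨fun hp2 => ?_, fun hp2 ha1 => ?_, fun hp2 h => ?_⟩
  · exact mul_rpow_sub_one_sub_add_nonpos_of_le_rpow hp hb.le (le_max_left _ _)
      (le_max_one_rpow_one_div_rpow (by linarith) (by linarith))
  · subst hp2
    have h1a : 1 - a ≠ 0 := by linarith
    have hroot : a * (b / (1 - a)) - b / (1 - a) + b = 0 := by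
      field_simp
      ring
    show a * (b / (1 - a)) ^ ((2 : ℝ) - 1) - b / (1 - a) + b ≤ 0
    rw [show (2 : ℝ) - 1 = 1 by norm_num, rpow_one, hroot]
  · exact mul_rpow_sub_one_sub_add_nonpos_of_critical hp2 ha hb.le h
end

section
/- Let p ≥ 1 and a, b > 0 be real numbers, and let M > 0 be a real number satisfying a·M^{p−1} − M + b ≤ 0. Let (s_t)_{t≥1} be a sequence of nonnegative real numbers with s_1 = 0 such that for every t ≥ 1, s_{t+1} ≤ ((t−1)/(t+1))·s_t + 2b/(t+1) + 2a·s_t^{p−1}/(t+1). Then s_t ≤ M for every t ≥ 1. -/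
/-! Each step bounds `s_{t+1}` by a convex combination, with weights `(t-1)/(t+1)` and `2/(t+1)`,
of `s_t` and `g(s_t) = a s_t^{p-1} + b`. As `g` is monotone on `[0, ∞)` and `g(M) ≤ M`, the
interval `[0, M]` is invariant, and `s_1 = 0` starts inside it. -/

theorem le_of_le_convex_step {s w : ℕ → ℝ} {g : ℝ → ℝ} {M : ℝ}
    (hw : ∀ t, 1 ≤ t → 0 ≤ w t ∧ w t ≤ 1)
    (hg : ∀ x, 0 ≤ x → x ≤ M → g x ≤ M)
    (hs_nonneg : ∀ t, 0 ≤ s t) (hs1 : s 1 ≤ M)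
    (hrec : ∀ t, 1 ≤ t → s (t + 1) ≤ (1 - w t) * s t + w t * g (s t)) :
    ∀ t, 1 ≤ t → s t ≤ M := by
  intro t ht
  induction t, ht using Nat.le_induction with
  | base => exact hs1
  | succ t ht ih =>
    obtain ⟨hw0, hw1⟩ := hw t ht
    calc s (t + 1) ≤ (1 - w t) * s t + w t * g (s t) := hrec t ht
      _ ≤ (1 - w t) * M + w t * M :=
        add_le_add (mul_le_mul_of_nonneg_left ih (by linarith))
          (mul_le_mul_of_nonneg_left (hg _ (hs_nonneg t) ih) hw0)
      _ = M := by ring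

theorem mul_rpow_sub_one_add_le {p a b M x : ℝ} (hp : 1 ≤ p) (ha : 0 ≤ a)
    (hfM : a * M ^ (p - 1) - M + b ≤ 0) (hx : 0 ≤ x) (hxM : x ≤ M) :
    a * x ^ (p - 1) + b ≤ M := by
  have : x ^ (p - 1) ≤ M ^ (p - 1) := Real.rpow_le_rpow hx hxM (by linarith)
  nlinarith

theorem stmt_2_general (p a b M : ℝ) (hp : 1 ≤ p) (ha : 0 < a) (hM : 0 < M)
    (hfM : a * M ^ (p - 1) - M + b ≤ 0)
    (s : ℕ → ℝ) (hs_nonneg : ∀ t, 0 ≤ s t) (hs1 : s 1 = 0)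
    (hrec : ∀ t : ℕ, 1 ≤ t →
      s (t + 1) ≤ (((t : ℝ) - 1) / ((t : ℝ) + 1)) * s t + 2 * b / ((t : ℝ) + 1)
        + 2 * a * (s t) ^ (p - 1) / ((t : ℝ) + 1)) :
    ∀ t : ℕ, 1 ≤ t → s t ≤ M := by
  refine le_of_le_convex_step (w := fun t => 2 / ((t : ℝ) + 1)) (g := fun x => a * x ^ (p - 1) + b)
    ?_ (fun x hx hxM => mul_rpow_sub_one_add_le hp ha.le hfM hx hxM) hs_nonneg (hs1 ▸ hM.le) ?_
  · intro t ht
    have : (1 : ℝ) ≤ t := by exact_mod_cast ht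
    exact ⟨by positivity, (div_le_one (by positivity)).2 (by linarith)⟩
  · intro t ht
    convert hrec t ht using 1
    field_simp
    ring

theorem stmt_2 (p a b M : ℝ) (hp : 1 ≤ p) (ha : 0 < a) (hb : 0 < b) (hM : 0 < M)
    (hfM : a * M ^ (p - 1) - M + b ≤ 0)
    (s : ℕ → ℝ) (hs_nonneg : ∀ t, 0 ≤ s t) (hs1 : s 1 = 0)
    (hrec : ∀ t : ℕ, 1 ≤ t →
      s (t + 1) ≤ (((t : ℝ) - 1) / ((t : ℝ) + 1)) * s t + 2 * b / ((t : ℝ) + 1)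
        + 2 * a * (s t) ^ (p - 1) / ((t : ℝ) + 1)) :
    ∀ t : ℕ, 1 ≤ t → s t ≤ M :=
  stmt_2_general p a b M hp ha hM hfM s hs_nonneg hs1 hrec
end

section
/- Let H be a real inner product space, let p ≥ 1, and let A, R, C, C' > 0 be real numbers. Set a = C'·(2R)^p·p and b = C·A, and let M > 0 be a real number satisfying a·M^{p−1} − M + b ≤ 0. Let (w_t)_{t≥1} be a sequence in H with w_1 = 0 such that for every t ≥ 1 there exist u_t, Φ_t ∈ H and μ_t ∈ [0,1] with ‖u_t‖ ≤ A and ‖Φ_t‖ ≤ 2R, and w_{t+1} = ((t−1)/(t+1))·w_t − (2C/(t+1))·u_t − (2C'·μ_t/(t+1))·p·sign(⟨w_t, Φ_t⟩)·|⟨w_t, Φ_t⟩|^{p−1}·Φ_t. Then ‖w_t‖ ≤ M for every t ≥ 1. -/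
/-!
Induction on `t`. If `‖w_t‖ ≤ M`, Cauchy–Schwarz gives `|⟪w_t, Φ_t⟫| ≤ 2RM`, so the penalty
term has norm at most `η_t a M^(p-1)` and the update has norm at most
`(1 - η_t) M + η_t (a M^(p-1) + b)` with `η_t = 2/(t+1)`. The hypothesis on `M` says exactly
that `a M^(p-1) + b ≤ M`, so this convex combination is again at most `M`.
-/

open RealInnerProductSpace

theorem abs_sign_mul_le (x y : ℝ) : |Real.sign x * y| ≤ |y| := by
  rw [abs_mul]
  rcases Real.sign_apply_eq x with h | h | h <;> simp [h]

section

variable {H : Type*} [NormedAddCommGroup H] [InnerProductSpace ℝ H]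

theorem norm_sign_mul_rpow_abs_inner_smul_le {w Φ : H} {q M B : ℝ} (hq : 0 ≤ q)
    (hw : ‖w‖ ≤ M) (hΦ : ‖Φ‖ ≤ B) :
    ‖(Real.sign ⟪w, Φ⟫ * |⟪w, Φ⟫| ^ q) • Φ‖ ≤ B ^ (q + 1) * M ^ q := by
  have hB : 0 ≤ B := (norm_nonneg Φ).trans hΦ
  have hM : 0 ≤ M := (norm_nonneg w).trans hw
  have hinner : |⟪w, Φ⟫| ≤ B * M :=
    (abs_real_inner_le_norm w Φ).trans (by rw [mul_comm]; gcongr)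
  calc ‖(Real.sign ⟪w, Φ⟫ * |⟪w, Φ⟫| ^ q) • Φ‖
      ≤ |⟪w, Φ⟫| ^ q * B := by
        rw [norm_smul, Real.norm_eq_abs]
        gcongr
        exact (abs_sign_mul_le _ _).trans_eq (abs_of_nonneg (by positivity))
    _ ≤ (B * M) ^ q * B := by gcongr
    _ = B ^ (q + 1) * M ^ q := by
        rw [Real.mul_rpow hB hM, Real.rpow_add_one' hB (by linarith)]
        ring

noncomputable def gkmStep (p C C' t μ : ℝ) (w u Φ : H) : H :=
  ((t - 1) / (t + 1)) • w - (2 * C / (t + 1)) • u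
    - ((2 * C' * μ / (t + 1)) * (p * Real.sign ⟪w, Φ⟫ * |⟪w, Φ⟫| ^ (p - 1))) • Φ

theorem norm_gkmStep_le {w u Φ : H} {p A R C C' M t μ : ℝ} (ht : 1 ≤ t) (hp : 1 ≤ p)
    (hC : 0 ≤ C) (hC' : 0 ≤ C') (hw : ‖w‖ ≤ M) (hu : ‖u‖ ≤ A) (hΦ : ‖Φ‖ ≤ 2 * R)
    (hμ : μ ∈ Set.Icc (0 : ℝ) 1) :
    ‖gkmStep p C C' t μ w u Φ‖
      ≤ (t - 1) / (t + 1) * M + 2 / (t + 1) * (C * A + C' * (2 * R) ^ p * p * M ^ (p - 1)) := by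
  obtain ⟨hμ0, hμ1⟩ := hμ
  have hM : 0 ≤ M := (norm_nonneg w).trans hw
  have ht' : 0 < t + 1 := by linarith
  have hw' : ‖((t - 1) / (t + 1)) • w‖ ≤ (t - 1) / (t + 1) * M := by
    rw [norm_smul_of_nonneg (div_nonneg (by linarith) ht'.le)]
    gcongr
  have hu' : ‖(2 * C / (t + 1)) • u‖ ≤ 2 * C / (t + 1) * A := by
    rw [norm_smul_of_nonneg (by positivity)]
    gcongr
  have hΦ' : ‖((2 * C' * μ / (t + 1)) * (p * Real.sign ⟪w, Φ⟫ * |⟪w, Φ⟫| ^ (p - 1))) • Φ‖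
      ≤ 2 * C' / (t + 1) * p * ((2 * R) ^ p * M ^ (p - 1)) := by
    have hp0 : 0 ≤ p := by linarith
    rw [mul_assoc p, ← mul_assoc, mul_smul,
      norm_smul_of_nonneg (t := 2 * C' * μ / (t + 1) * p) (by positivity)]
    have h := norm_sign_mul_rpow_abs_inner_smul_le (q := p - 1) (by linarith) hw hΦ
    rw [sub_add_cancel] at h
    gcongr ?_ / _ * _ * ?_
    exact mul_le_of_le_one_right (by positivity) hμ1
  calc ‖gkmStep p C C' t μ w u Φ‖
      ≤ (t - 1) / (t + 1) * M + 2 * C / (t + 1) * A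
        + 2 * C' / (t + 1) * p * ((2 * R) ^ p * M ^ (p - 1)) :=
        (norm_sub_le _ _).trans (add_le_add ((norm_sub_le _ _).trans (add_le_add hw' hu')) hΦ')
    _ = _ := by ring

theorem norm_gkmStep_le_of_norm_le {w u Φ : H} {p A R C C' M t μ : ℝ} (ht : 1 ≤ t)
    (hp : 1 ≤ p) (hC : 0 ≤ C) (hC' : 0 ≤ C')
    (hfM : (C' * (2 * R) ^ p * p) * M ^ (p - 1) - M + (C * A) ≤ 0)
    (hw : ‖w‖ ≤ M) (hu : ‖u‖ ≤ A) (hΦ : ‖Φ‖ ≤ 2 * R) (hμ : μ ∈ Set.Icc (0 : ℝ) 1) :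
    ‖gkmStep p C C' t μ w u Φ‖ ≤ M := by
  refine (norm_gkmStep_le ht hp hC hC' hw hu hΦ hμ).trans ?_
  have ht' : 0 < t + 1 := by linarith
  rw [div_mul_eq_mul_div, div_mul_eq_mul_div, ← add_div, div_le_iff₀ ht']
  nlinarith

end

theorem stmt_3_general {H : Type*} [NormedAddCommGroup H] [InnerProductSpace ℝ H]
    (p A R C C' M : ℝ) (hp : 1 ≤ p) (hC : 0 < C) (hC' : 0 < C')
    (hM : 0 < M)
    (hfM : (C' * (2 * R) ^ p * p) * M ^ (p - 1) - M + (C * A) ≤ 0)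
    (w : ℕ → H) (hw1 : w 1 = 0)
    (hrec : ∀ t : ℕ, 1 ≤ t → ∃ (u Φ : H) (μ : ℝ),
      ‖u‖ ≤ A ∧ ‖Φ‖ ≤ 2 * R ∧ μ ∈ Set.Icc (0 : ℝ) 1 ∧
      w (t + 1) = (((t : ℝ) - 1) / ((t : ℝ) + 1)) • w t
        - (2 * C / ((t : ℝ) + 1)) • u
        - ((2 * C' * μ / ((t : ℝ) + 1)) * (p * Real.sign ⟪w t, Φ⟫ * |⟪w t, Φ⟫| ^ (p - 1))) • Φ) :
    ∀ t : ℕ, 1 ≤ t → ‖w t‖ ≤ M := by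
  intro t ht
  induction t, ht using Nat.le_induction with
  | base => simpa [hw1] using hM.le
  | succ n hn ih =>
    obtain ⟨u, Φ, μ, hu, hΦ, hμ, hstep⟩ := hrec n hn
    rw [hstep]
    exact norm_gkmStep_le_of_norm_le (by exact_mod_cast hn) hp hC.le hC'.le hfM ih hu hΦ hμ

theorem stmt_3 {H : Type*} [NormedAddCommGroup H] [InnerProductSpace ℝ H]
    (p A R C C' M : ℝ) (hp : 1 ≤ p) (hA : 0 < A) (hR : 0 < R) (hC : 0 < C) (hC' : 0 < C')
    (hM : 0 < M)
    (hfM : (C' * (2 * R) ^ p * p) * M ^ (p - 1) - M + (C * A) ≤ 0)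
    (w : ℕ → H) (hw1 : w 1 = 0)
    (hrec : ∀ t : ℕ, 1 ≤ t → ∃ (u Φ : H) (μ : ℝ),
      ‖u‖ ≤ A ∧ ‖Φ‖ ≤ 2 * R ∧ μ ∈ Set.Icc (0 : ℝ) 1 ∧
      w (t + 1) = (((t : ℝ) - 1) / ((t : ℝ) + 1)) • w t
        - (2 * C / ((t : ℝ) + 1)) • u
        - ((2 * C' * μ / ((t : ℝ) + 1)) * (p * Real.sign ⟪w t, Φ⟫ * |⟪w t, Φ⟫| ^ (p - 1))) • Φ) :
    ∀ t : ℕ, 1 ≤ t → ‖w t‖ ≤ M :=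
  stmt_3_general p A R C C' M hp hC hC' hM hfM w hw1 hrec
end

section
/- Let G ≥ 0 be a real number, T ≥ 1 an integer, and let (e_t)_{1≤t≤T} and (d_t)_{1≤t≤T+1} be real sequences with d_t ≥ 0 for all t. Suppose that for every t with 1 ≤ t ≤ T, e_t ≤ (1/(2η_t) − 1/2)·d_t − (1/(2η_t))·d_{t+1} + G²·η_t/2, where η_t = 2/(t+1). Then (2/(T(T+1))) · Σ_{t=1}^{T} t·e_t ≤ 2G²/T. -/
/-!
With `η_t = 2/(t+1)` the step inequality reads
`e_t ≤ (t-1)/4 · d_t - (t+1)/4 · d_{t+1} + G²/(t+1)`. Multiplying by `t` and setting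
`Φ t = t(t-1)/4 · d_t` gives `t e_t ≤ Φ t - Φ (t+1) + G²`, which telescopes to
`∑ t e_t ≤ Φ 1 - Φ (T+1) + T G² ≤ T G²` because `Φ 1 = 0` and `Φ (T+1) ≥ 0`.
-/

open Finset

theorem sum_Icc_le_of_le_sub_add {a Φ : ℕ → ℝ} {c : ℝ} {T : ℕ}
    (h : ∀ t, 1 ≤ t → t ≤ T → a t ≤ Φ t - Φ (t + 1) + c) :
    ∑ t ∈ Icc 1 T, a t ≤ Φ 1 - Φ (T + 1) + T * c := by
  induction T with
  | zero => simp
  | succ n ih =>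
    rw [sum_Icc_succ_top (by omega)]
    have hn := h (n + 1) (by omega) le_rfl
    have hsum := ih fun t ht₁ ht₂ => h t ht₁ (by omega)
    push_cast
    linarith

theorem mul_le_potential_sub_of_step {x e d₀ d₁ G : ℝ} (hx : 0 ≤ x)
    (h : e ≤ (1 / (2 * (2 / (x + 1))) - 1 / 2) * d₀ - 1 / (2 * (2 / (x + 1))) * d₁
      + G ^ 2 * (2 / (x + 1)) / 2) :
    x * e ≤ x * (x - 1) / 4 * d₀ - (x + 1) * x / 4 * d₁ + G ^ 2 := by
  have hx₁ : 0 < x + 1 := by linarith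
  have hη : 1 / (2 * (2 / (x + 1))) = (x + 1) / 4 := by field_simp; ring
  have hG₁ : G ^ 2 * (2 / (x + 1)) / 2 = G ^ 2 / (x + 1) := by field_simp
  rw [hη, hG₁] at h
  have hG : x * (G ^ 2 / (x + 1)) ≤ G ^ 2 := by
    rw [mul_div_left_comm]
    exact mul_le_of_le_one_right (sq_nonneg G) ((div_le_one hx₁).2 (by linarith))
  calc x * e ≤ x * (((x + 1) / 4 - 1 / 2) * d₀ - (x + 1) / 4 * d₁ + G ^ 2 / (x + 1)) :=
        mul_le_mul_of_nonneg_left h hx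
    _ ≤ _ := by linarith

theorem stmt_7_general (G : ℝ) (T : ℕ) (hT : 1 ≤ T)
    (e d : ℕ → ℝ) (hd : ∀ t : ℕ, 1 ≤ t → t ≤ T + 1 → 0 ≤ d t)
    (hstep : ∀ t : ℕ, 1 ≤ t → t ≤ T →
      e t ≤ (1 / (2 * (2 / ((t : ℝ) + 1))) - 1 / 2) * d t
        - (1 / (2 * (2 / ((t : ℝ) + 1)))) * d (t + 1)
        + G ^ 2 * (2 / ((t : ℝ) + 1)) / 2) :
    (2 / ((T : ℝ) * ((T : ℝ) + 1))) * ∑ t ∈ Finset.Icc 1 T, (t : ℝ) * e t ≤ 2 * G ^ 2 / T := by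
  have hsum : ∑ t ∈ Icc 1 T, (t : ℝ) * e t ≤ T * G ^ 2 := by
    have htele := sum_Icc_le_of_le_sub_add (Φ := fun t => (t : ℝ) * (t - 1) / 4 * d t) (c := G ^ 2)
      fun t ht₁ htT => by
        simpa using mul_le_potential_sub_of_step (Nat.cast_nonneg t) (hstep t ht₁ htT)
    have hΦ : 0 ≤ ((T + 1 : ℕ) : ℝ) * ((T + 1 : ℕ) - 1) / 4 * d (T + 1) := by
      have := hd (T + 1) (by omega) le_rfl
      push_cast
      rw [add_sub_cancel_right]
      positivity
    simp only [Nat.cast_one, sub_self, mul_zero, zero_div, zero_mul] at htele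
    linarith
  have hT' : (0 : ℝ) < T := by exact_mod_cast hT
  calc 2 / ((T : ℝ) * (T + 1)) * ∑ t ∈ Icc 1 T, (t : ℝ) * e t
      ≤ 2 / ((T : ℝ) * (T + 1)) * (T * G ^ 2) := by gcongr
    _ = 2 * G ^ 2 / (T + 1) := by field_simp
    _ ≤ 2 * G ^ 2 / T := by gcongr; linarith

theorem stmt_7 (G : ℝ) (hG : 0 ≤ G) (T : ℕ) (hT : 1 ≤ T)
    (e d : ℕ → ℝ) (hd : ∀ t : ℕ, 1 ≤ t → t ≤ T + 1 → 0 ≤ d t)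
    (hstep : ∀ t : ℕ, 1 ≤ t → t ≤ T →
      e t ≤ (1 / (2 * (2 / ((t : ℝ) + 1))) - 1 / 2) * d t
        - (1 / (2 * (2 / ((t : ℝ) + 1)))) * d (t + 1)
        + G ^ 2 * (2 / ((t : ℝ) + 1)) / 2) :
    (2 / ((T : ℝ) * ((T : ℝ) + 1))) * ∑ t ∈ Finset.Icc 1 T, (t : ℝ) * e t ≤ 2 * G ^ 2 / T :=
  stmt_7_general G T hT e d hd hstep
end

section
/- Let H be a real inner product space, let J : H → ℝ be a convex function, let w* ∈ H satisfy J(w*) ≤ J(w) for all w ∈ H, and let h : H → ℝ be a convex function with J(w) = ½‖w‖² + h(w) such that h has a gradient at w* (i.e., h is Fréchet differentiable at w*). Let G > 0 be a real number, T ≥ 1 an integer, and (w_t)_{1≤t≤T+1} a sequence in H such that, setting d_t = ‖w_t − w*‖², e_t = J(w_t) − J(w*), and η_t = 2/(t+1), for every 1 ≤ t ≤ T one has e_t ≤ (1/(2η_t) − 1/2)·d_t − (1/(2η_t))·d_{t+1} + G²·η_t/2. Then the weighted average w̄_{T+1} = (2/(T(T+1)))·Σ_{t=1}^{T} t·w_t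 satisfies ‖w̄_{T+1} − w*‖² ≤ 4G²/T. -/
/-!
Multiplying the `t`-th step inequality by `t` makes the distance terms telescope, so
`∑ t e_t ≤ T G²`, and Jensen's inequality for the `t`-weighted average gives
`J(w̄) - J(w*) ≤ 2G²/(T+1)`. Since `J = ½‖·‖² + h` is `1`-strongly convex, it grows at least like
`½‖w - w*‖²` away from its minimiser, which turns this into the distance bound.
-/

open Finset Filter Topology

theorem StrongConvexOn.mul_sq_norm_sub_le_of_isMinOn {E : Type*} [NormedAddCommGroup E]
    [NormedSpace ℝ E] {s : Set E} {m : ℝ} {f : E → ℝ} {x y : E} (hf : StrongConvexOn s m f)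
    (hmin : IsMinOn f s x) (hx : x ∈ s) (hy : y ∈ s) :
    m / 2 * ‖y - x‖ ^ 2 ≤ f y - f x := by
  -- Minimality of `x` on the segment `[x, y]` bounds the strong convexity defect at
  -- `(1 - b) • x + b • y` by `b * (f y - f x)`; divide by `b` and let `b → 0`.
  have hlim : Tendsto (fun b : ℝ ↦ (1 - b) * (m / 2 * ‖x - y‖ ^ 2)) (𝓝[>] 0)
      (𝓝 (m / 2 * ‖y - x‖ ^ 2)) := by
    rw [norm_sub_rev]
    exact (Continuous.tendsto (by fun_prop) 0).mono_left nhdsWithin_le_nhds |>.trans (by simp)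
  refine le_of_tendsto hlim ?_
  filter_upwards [Ioc_mem_nhdsGT zero_lt_one] with b ⟨hb0, hb1⟩
  have hconv := hf.2 hx hy (sub_nonneg.2 hb1) hb0.le (sub_add_cancel 1 b)
  have hle : f x ≤ f ((1 - b) • x + b • y) :=
    hmin (hf.1 hx hy (sub_nonneg.2 hb1) hb0.le (sub_add_cancel 1 b))
  simp only [smul_eq_mul] at hconv
  have : b * ((1 - b) * (m / 2 * ‖x - y‖ ^ 2)) ≤ b * (f y - f x) := by nlinarith [hle]
  exact le_of_mul_le_mul_left this hb0

theorem ConvexOn.strongConvexOn_add_sq_norm {E : Type*} [NormedAddCommGroup E]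
    [InnerProductSpace ℝ E] {s : Set E} {h : E → ℝ} (hh : ConvexOn ℝ s h) (m : ℝ) :
    StrongConvexOn s m (fun x ↦ m / 2 * ‖x‖ ^ 2 + h x) :=
  strongConvexOn_iff_convex.2 (by simpa using hh)

theorem sum_Icc_one_natCast (n : ℕ) : ∑ t ∈ Icc 1 n, (t : ℝ) = n * (n + 1) / 2 := by
  induction n with
  | zero => simp
  | succ n ih =>
    rw [sum_Icc_succ_top (Nat.le_add_left 1 n), ih]
    push_cast
    ring

theorem sum_Icc_mul_le_of_descent {d e : ℕ → ℝ} {G : ℝ} {T : ℕ} (hd : ∀ t, 0 ≤ d t)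
    (he : ∀ t : ℕ, 1 ≤ t → t ≤ T →
      e t ≤ (1 / (2 * (2 / ((t : ℝ) + 1))) - 1 / 2) * d t
        - (1 / (2 * (2 / ((t : ℝ) + 1)))) * d (t + 1) + G ^ 2 * (2 / ((t : ℝ) + 1)) / 2) :
    ∑ t ∈ Icc 1 T, (t : ℝ) * e t ≤ T * G ^ 2 := by
  -- With `η = 2 / (t + 1)`: `t (1 / (2η) - 1 / 2) = t (t - 1) / 4` and `t / (2η) = (t + 1) t / 4`.
  set c : ℕ → ℝ := fun t ↦ t * (t - 1) / 4 * d t with hc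
  have step : ∀ t ∈ Icc 1 T, (t : ℝ) * e t ≤ G ^ 2 - (c (t + 1) - c t) := by
    intro t ht
    obtain ⟨ht1, htT⟩ := mem_Icc.1 ht
    have hmul := mul_le_mul_of_nonneg_left (he t ht1 htT) (Nat.cast_nonneg (α := ℝ) t)
    have hpos : (0 : ℝ) < t + 1 := by positivity
    have hrhs : (t : ℝ) * ((1 / (2 * (2 / ((t : ℝ) + 1))) - 1 / 2) * d t
        - (1 / (2 * (2 / ((t : ℝ) + 1)))) * d (t + 1) + G ^ 2 * (2 / ((t : ℝ) + 1)) / 2)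
        = G ^ 2 * (t / (t + 1)) - (c (t + 1) - c t) := by
      simp only [hc]
      push_cast
      field_simp
      ring
    have hfrac : G ^ 2 * (t / (t + 1)) ≤ G ^ 2 :=
      mul_le_of_le_one_right (sq_nonneg G) ((div_le_one hpos).2 (by linarith))
    linarith
  have hc1 : c 1 = 0 := by simp [hc]
  have hcT : 0 ≤ c (T + 1) := by
    simp only [hc, Nat.cast_add_one, add_sub_cancel_right]
    have := hd (T + 1)
    positivity
  calc ∑ t ∈ Icc 1 T, (t : ℝ) * e t ≤ ∑ t ∈ Icc 1 T, (G ^ 2 - (c (t + 1) - c t)) :=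
        sum_le_sum step
    _ = T * G ^ 2 - (c (T + 1) - c 1) := by
        rw [sum_sub_distrib, ← Ico_add_one_right_eq_Icc, sum_Ico_sub c (Nat.le_add_left 1 T),
          sum_const, Nat.card_Ico, nsmul_eq_mul, Nat.add_sub_cancel]
    _ ≤ T * G ^ 2 := by linarith

theorem stmt_15_general {H : Type*} [NormedAddCommGroup H] [InnerProductSpace ℝ H]
    (J : H → ℝ) (hJconv : ConvexOn ℝ Set.univ J)
    (wstar : H) (hmin : ∀ w : H, J wstar ≤ J w)
    (h : H → ℝ) (hconv : ConvexOn ℝ Set.univ h)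
    (hJ : ∀ x, J x = (1 / 2) * ‖x‖ ^ 2 + h x)
    (G : ℝ) (T : ℕ) (hT : 1 ≤ T)
    (w : ℕ → H)
    (hstep : ∀ t : ℕ, 1 ≤ t → t ≤ T →
      J (w t) - J wstar ≤ (1 / (2 * (2 / ((t : ℝ) + 1))) - 1 / 2) * ‖w t - wstar‖ ^ 2
        - (1 / (2 * (2 / ((t : ℝ) + 1)))) * ‖w (t + 1) - wstar‖ ^ 2
        + G ^ 2 * (2 / ((t : ℝ) + 1)) / 2) :
    ‖(2 / ((T : ℝ) * ((T : ℝ) + 1))) • (∑ t ∈ Finset.Icc 1 T, (t : ℝ) • w t) - wstar‖ ^ 2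
      ≤ 4 * G ^ 2 / T := by
  have hTpos : (0 : ℝ) < T := by exact_mod_cast hT
  have hS := sum_Icc_one_natCast T
  have hweights : 0 < ∑ t ∈ Icc 1 T, (t : ℝ) := by rw [hS]; positivity
  rw [show (2 / ((T : ℝ) * ((T : ℝ) + 1))) • ∑ t ∈ Icc 1 T, (t : ℝ) • w t
      = (Icc 1 T).centerMass (fun t ↦ (t : ℝ)) w by rw [centerMass, hS, inv_div]]
  set wbar := (Icc 1 T).centerMass (fun t ↦ (t : ℝ)) w
  have hJstrong : StrongConvexOn Set.univ 1 J := by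
    simpa only [← hJ, div_one] using hconv.strongConvexOn_add_sq_norm 1
  have hstrong : 1 / 2 * ‖wbar - wstar‖ ^ 2 ≤ J wbar - J wstar :=
    hJstrong.mul_sq_norm_sub_le_of_isMinOn (fun w _ ↦ hmin w) trivial trivial
  have hjensen : J wbar - J wstar
      ≤ (∑ t ∈ Icc 1 T, (t : ℝ))⁻¹ * ∑ t ∈ Icc 1 T, (t : ℝ) * (J (w t) - J wstar) := by
    have := (hJconv.add_const (-J wstar)).map_centerMass_le (fun t _ ↦ t.cast_nonneg) hweights
      (p := w) (fun _ _ ↦ trivial)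
    simp only [Function.comp_def, Pi.add_apply, ← sub_eq_add_neg] at this
    exact this
  have hdescent := sum_Icc_mul_le_of_descent (fun t ↦ sq_nonneg ‖w t - wstar‖) hstep
  calc ‖wbar - wstar‖ ^ 2
      ≤ 2 * ((∑ t ∈ Icc 1 T, (t : ℝ))⁻¹ * ∑ t ∈ Icc 1 T, (t : ℝ) * (J (w t) - J wstar)) := by
        linarith
    _ ≤ 2 * ((∑ t ∈ Icc 1 T, (t : ℝ))⁻¹ * (T * G ^ 2)) := by gcongr
    _ = 4 * G ^ 2 / (T + 1) := by rw [hS]; field_simp; ring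
    _ ≤ 4 * G ^ 2 / T := by gcongr; linarith

theorem stmt_15 {H : Type*} [NormedAddCommGroup H] [InnerProductSpace ℝ H]
    (J : H → ℝ) (hJconv : ConvexOn ℝ Set.univ J)
    (wstar : H) (hmin : ∀ w : H, J wstar ≤ J w)
    (h : H → ℝ) (hconv : ConvexOn ℝ Set.univ h)
    (hJ : ∀ x, J x = (1 / 2) * ‖x‖ ^ 2 + h x)
    (gstar : H) (hderiv : HasFDerivAt h (innerSL ℝ gstar) wstar)
    (G : ℝ) (hG : 0 < G) (T : ℕ) (hT : 1 ≤ T)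
    (w : ℕ → H)
    (hstep : ∀ t : ℕ, 1 ≤ t → t ≤ T →
      J (w t) - J wstar ≤ (1 / (2 * (2 / ((t : ℝ) + 1))) - 1 / 2) * ‖w t - wstar‖ ^ 2
        - (1 / (2 * (2 / ((t : ℝ) + 1)))) * ‖w (t + 1) - wstar‖ ^ 2
        + G ^ 2 * (2 / ((t : ℝ) + 1)) / 2) :
    ‖(2 / ((T : ℝ) * ((T : ℝ) + 1))) • (∑ t ∈ Finset.Icc 1 T, (t : ℝ) • w t) - wstar‖ ^ 2
      ≤ 4 * G ^ 2 / T :=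
  stmt_15_general J hJconv wstar hmin h hconv hJ G T hT w hstep
end
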